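/- arXiv:2405.06723 — 5 statements merged into one kernel-verified Lean document; each statement's English description precedes it below -/
import Mathlib

section
/- (L² bound for the Fourier transform of the convolution, determinantal form.) Let n ≥ 2 and let α, β ∈ ℝ^n. Then the series Σ_{l ∈ ℤ^n, l_1 > l_2 > … > l_{n−1} > l_n = 0} |det[exp(2πi α_r l_s)]_{1≤r,s≤n}|² · |det[exp(2πi β_r l_s)]_{1≤r,s≤n}|² / Δ(l)² converges (has finite sum). -/
open scoped BigOperators

noncomputable section

/-- The set of pairs `(r,s)` with `r < s` in `Fin n`. -/
def pairsLt (n : ℕ) : Finset (Fin n × Fin n) :=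
  Finset.univ.filter (fun p => p.1 < p.2)

/-- Vandermonde determinant `Δ(I) = ∏_{r<s} (I_r − I_s)` of an integer tuple. -/
def vandZ {n : ℕ} (I : Fin n → ℤ) : ℤ := ∏ p ∈ pairsLt n, (I p.1 - I p.2)

/-- Strictly decreasing integer tuples whose last entry is `0`. -/
def DecSet (n : ℕ) : Set (Fin n → ℤ) :=
  {I | (∀ r s : Fin n, r < s → I s < I r) ∧ (∀ r : Fin n, (r : ℕ) = n - 1 → I r = 0)}

/-- `2πi` as a complex number. -/
def twoPiI : ℂ := 2 * (Real.pi : ℂ) * Complex.I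

/-!
Each determinant has entries of modulus one, so its norm is at most `n!` and the numerators are
bounded. For strictly decreasing `l` every factor of `Δ(l)` is at least `1`, so `Δ(l)` dominates the
product of the consecutive gaps `l_i - l_{i+1}`. Since `l_n = 0`, `l` is determined by its gaps, and
the series is dominated by `∑_{g ∈ ℕ^{n-1}} ∏ 1 / g_i²`, a product of convergent series.
-/

open Matrix Finset

lemma norm_det_le_factorial {𝕜 ι : Type*} [NormedField 𝕜] [Fintype ι] [DecidableEq ι]
    (A : Matrix ι ι 𝕜) (hA : ∀ i j, ‖A i j‖ ≤ 1) : ‖A.det‖ ≤ (Fintype.card ι).factorial := by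
  calc ‖A.det‖ = NormedField.toAbsoluteValue 𝕜 A.det := rfl
    _ ≤ (Fintype.card ι).factorial • 1 ^ Fintype.card ι := Matrix.det_le hA
    _ = (Fintype.card ι).factorial := by simp

lemma norm_exp_twoPiI_mul (a : ℝ) (k : ℤ) : ‖Complex.exp (twoPiI * a * k)‖ = 1 := by
  rw [show twoPiI * a * k = ((2 * Real.pi * a * k : ℝ) : ℂ) * Complex.I by
    push_cast [twoPiI]; ring]
  exact Complex.norm_exp_ofReal_mul_I _

lemma summable_pi_prod_of_nonneg {α : Type*} {f : α → ℝ} (hf0 : 0 ≤ f) (hf : Summable f) :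
    ∀ m : ℕ, Summable (fun v : Fin m → α => ∏ i, f (v i))
  | 0 => Summable.of_finite
  | m + 1 => by
    have h := (hf.mul_of_nonneg (summable_pi_prod_of_nonneg hf0 hf m) hf0
      fun v => prod_nonneg fun i _ => hf0 (v i)).comp_injective
      (Fin.consEquiv fun _ : Fin (m + 1) => α).symm.injective
    refine h.congr fun v => ?_
    simp [Fin.prod_univ_succ, Fin.consEquiv, Fin.tail]

lemma prod_sub_succ_le_vandZ {m : ℕ} {l : Fin (m + 1) → ℤ} (hl : StrictAnti l) :
    ∏ i : Fin m, (l i.castSucc - l i.succ) ≤ vandZ l := by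
  have hpos : ∀ p ∈ pairsLt (m + 1), 1 ≤ l p.1 - l p.2 := fun p hp => by
    have := hl (Finset.mem_filter.mp hp).2
    omega
  let succPair : Fin m ↪ Fin (m + 1) × Fin (m + 1) :=
    ⟨fun i => (i.castSucc, i.succ), fun i j h => Fin.succ_injective _ (congrArg Prod.snd h)⟩
  have hsub : univ.map succPair ⊆ pairsLt (m + 1) := fun p hp => by
    obtain ⟨i, -, rfl⟩ := Finset.mem_map.mp hp
    exact mem_filter.mpr ⟨mem_univ _, Fin.castSucc_lt_succ⟩
  calc ∏ i : Fin m, (l i.castSucc - l i.succ)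
      = ∏ p ∈ univ.map succPair, (l p.1 - l p.2) := by rw [prod_map]; rfl
    _ ≤ vandZ l := prod_le_prod_of_subset_of_one_le hsub
        (fun p hp => zero_le_one.trans (hpos p (hsub hp))) fun p hp _ => hpos p hp

-- The truncation `Int.toNat` is harmless on `DecSet`, where all gaps are positive.
def gaps {m : ℕ} (l : Fin (m + 1) → ℤ) (i : Fin m) : ℕ := (l i.castSucc - l i.succ).toNat

lemma gaps_injOn (m : ℕ) : Set.InjOn (gaps (m := m)) (DecSet (m + 1)) := by
  intro l hl l' hl' h
  funext i
  induction i using Fin.reverseInduction with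
  | last => rw [hl.2 _ (by simp), hl'.2 _ (by simp)]
  | cast i ih =>
    have hi := congrFun h i
    simp only [gaps] at hi
    have := hl.1 _ _ (Fin.castSucc_lt_succ (i := i))
    have := hl'.1 _ _ (Fin.castSucc_lt_succ (i := i))
    omega

lemma one_div_vandZ_sq_le {m : ℕ} {l : Fin (m + 1) → ℤ} (hl : l ∈ DecSet (m + 1)) :
    1 / (vandZ l : ℝ) ^ 2 ≤ ∏ i, 1 / (gaps l i : ℝ) ^ 2 := by
  have hgap : ∀ i : Fin m, 1 ≤ l i.castSucc - l i.succ := fun i => by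
    have := hl.1 _ _ (Fin.castSucc_lt_succ (i := i))
    omega
  have hcast : ∀ i, (gaps l i : ℝ) = ((l i.castSucc - l i.succ : ℤ) : ℝ) := fun i => by
    rw [gaps, ← Int.cast_natCast, Int.toNat_of_nonneg (zero_le_one.trans (hgap i))]
  have hprod : (1 : ℝ) ≤ ((∏ i : Fin m, (l i.castSucc - l i.succ) : ℤ) : ℝ) := by
    exact_mod_cast one_le_prod fun i _ => hgap i
  rw [prod_div_distrib, prod_const_one, prod_pow]
  simp only [hcast, ← Int.cast_prod]
  exact one_div_le_one_div_of_le (pow_pos (zero_lt_one.trans_le hprod) 2)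
    (pow_le_pow_left₀ (zero_le_one.trans hprod) (by exact_mod_cast prod_sub_succ_le_vandZ hl.1) 2)

lemma summable_one_div_vandZ_sq :
    ∀ n : ℕ, Summable (fun l : DecSet n => 1 / (vandZ l.1 : ℝ) ^ 2)
  | 0 => Summable.of_finite
  | m + 1 =>
    ((summable_pi_prod_of_nonneg (fun k => by positivity)
      (Real.summable_one_div_nat_pow.mpr one_lt_two) m).comp_injective
      (gaps_injOn m).injective).of_nonneg_of_le (fun _ => by positivity)
      fun l => one_div_vandZ_sq_le l.2

theorem statement3_general (n : ℕ) (α β : Fin n → ℝ) :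
    Summable (fun l : DecSet n =>
      ‖(Matrix.of fun r s : Fin n =>
          Complex.exp (twoPiI * (α r : ℂ) * ((l.1 s : ℤ) : ℂ))).det‖ ^ 2 *
      ‖(Matrix.of fun r s : Fin n =>
          Complex.exp (twoPiI * (β r : ℂ) * ((l.1 s : ℤ) : ℂ))).det‖ ^ 2 /
      ((vandZ l.1 : ℝ) ^ 2)) := by
  have hdet : ∀ (γ : Fin n → ℝ) (l : Fin n → ℤ),
      ‖(Matrix.of fun r s : Fin n => Complex.exp (twoPiI * γ r * l s)).det‖ ≤ n.factorial :=
    fun γ l =>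
      (norm_det_le_factorial (Matrix.of _) fun r s => (norm_exp_twoPiI_mul (γ r) (l s)).le).trans_eq
        (by simp)
  refine ((summable_one_div_vandZ_sq n).mul_left ((n.factorial : ℝ) ^ 2 * n.factorial ^ 2)
    ).of_nonneg_of_le (fun _ => by positivity) fun l => ?_
  rw [mul_one_div]
  gcongr
  exacts [hdet α l.1, hdet β l.1]

/-- For any `n ≥ 2` and `α, β ∈ ℝ^n`, the series
`Σ_{l_1 > … > l_{n-1} > l_n = 0} |det[e^{2πi α_r l_s}]|² |det[e^{2πi β_r l_s}]|² / Δ(l)²`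
converges. -/
theorem statement3 (n : ℕ) (hn : 2 ≤ n) (α β : Fin n → ℝ) :
    Summable (fun l : DecSet n =>
      ‖(Matrix.of fun r s : Fin n =>
          Complex.exp (twoPiI * (α r : ℂ) * ((l.1 s : ℤ) : ℂ))).det‖ ^ 2 *
      ‖(Matrix.of fun r s : Fin n =>
          Complex.exp (twoPiI * (β r : ℂ) * ((l.1 s : ℤ) : ℂ))).det‖ ^ 2 /
      ((vandZ l.1 : ℝ) ^ 2)) :=
  statement3_general n α β
end
end

section
/- For every n ≥ 2, the series V_n = Σ_{λ ∈ ℤ^n, λ_1 > λ_2 > … > λ_{n−1} > λ_n = 0} ∏_{1≤r<s≤n} (λ_r − λ_s)^{−2} converges (has finite sum). -/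
open scoped BigOperators

noncomputable section

/-!
Only the `n - 1` factors coming from consecutive pairs `(r, r + 1)` matter: every factor is
at most `1` because the entries are distinct integers, and the tuple is recovered from its
consecutive gaps `λ_r - λ_{r+1}` since `λ_n = 0`. Hence `V_n` is dominated by
`(∑_{k ≠ 0} k⁻²)^(n-1) < ∞`.
-/

theorem Summable.prod_fin_pi {α : Type*} {g : α → ℝ} (hg : Summable g) (hg0 : 0 ≤ g) :
    ∀ m : ℕ, Summable fun d : Fin m → α => ∏ r, g (d r)
  | 0 => .of_finite
  | m + 1 => by
    have hprod := hg.mul_of_nonneg (hg.prod_fin_pi hg0 m) hg0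
      fun d => Finset.prod_nonneg fun r _ => hg0 (d r)
    refine ((Fin.consEquiv fun _ => α).symm.summable_iff.mpr hprod).congr fun d => ?_
    simp [Fin.consEquiv, Fin.prod_univ_succ, Fin.tail]

theorem summable_int_inv_sq : Summable fun k : ℤ => ((k : ℝ) ^ 2)⁻¹ := by
  simpa only [one_div] using Real.summable_one_div_int_pow.mpr one_lt_two

theorem int_inv_sq_le_one {k : ℤ} (hk : k ≠ 0) : ((k : ℝ) ^ 2)⁻¹ ≤ 1 :=
  inv_le_one_of_one_le₀ <| (one_le_sq_iff_one_le_abs _).mpr <| by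
    exact_mod_cast Int.one_le_abs hk

section ConsecutiveGaps

variable {m : ℕ}

def consecutiveGaps (f : Fin (m + 1) → ℤ) (r : Fin m) : ℤ :=
  f r.castSucc - f r.succ

theorem eq_of_consecutiveGaps_eq {f g : Fin (m + 1) → ℤ}
    (hlast : f (Fin.last m) = g (Fin.last m))
    (h : consecutiveGaps f = consecutiveGaps g) : f = g := by
  funext k
  induction k using Fin.reverseInduction with
  | last => exact hlast
  | cast r ih =>
    have := congrFun h r
    simp only [consecutiveGaps] at this
    omega

theorem prod_pairsLt_inv_sq_le {f : Fin (m + 1) → ℤ} (hf : StrictAnti f) :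
    ∏ p ∈ pairsLt (m + 1), (((f p.1 - f p.2 : ℤ) : ℝ) ^ 2)⁻¹ ≤
      ∏ r, ((consecutiveGaps f r : ℝ) ^ 2)⁻¹ := by
  let consecutive : Fin m ↪ Fin (m + 1) × Fin (m + 1) :=
    ⟨fun r => (r.castSucc, r.succ),
      fun _ _ hab => Fin.castSucc_injective m (congrArg Prod.fst hab)⟩
  have hsub : Finset.univ.map consecutive ⊆ pairsLt (m + 1) := by
    intro p hp
    obtain ⟨r, -, rfl⟩ := Finset.mem_map.mp hp
    exact Finset.mem_filter.mpr ⟨Finset.mem_univ _, Fin.castSucc_lt_succ⟩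
  calc ∏ p ∈ pairsLt (m + 1), (((f p.1 - f p.2 : ℤ) : ℝ) ^ 2)⁻¹
      ≤ ∏ p ∈ Finset.univ.map consecutive, (((f p.1 - f p.2 : ℤ) : ℝ) ^ 2)⁻¹ :=
        Finset.prod_le_prod_of_subset_of_le_one hsub (fun _ _ => by positivity) fun p hp _ =>
          int_inv_sq_le_one (sub_ne_zero.mpr (hf (Finset.mem_filter.mp hp).2).ne')
    _ = ∏ r, ((consecutiveGaps f r : ℝ) ^ 2)⁻¹ := Finset.prod_map _ _ _

end ConsecutiveGaps

theorem statement4_general (n : ℕ) :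
    Summable (fun l : DecSet n =>
      ∏ p ∈ pairsLt n, ((((l.1 p.1 - l.1 p.2 : ℤ) : ℝ)) ^ 2)⁻¹) := by
  cases n with
  | zero => exact .of_finite
  | succ m =>
    have hlast (l : DecSet (m + 1)) : l.1 (Fin.last m) = 0 := l.2.2 _ (by simp)
    have hinj : Function.Injective fun l : DecSet (m + 1) => consecutiveGaps l.1 :=
      fun l l' h => Subtype.ext (eq_of_consecutiveGaps_eq (by rw [hlast, hlast]) h)
    have hmajorant :=
      (summable_int_inv_sq.prod_fin_pi (fun _ => by positivity) m).comp_injective hinj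
    exact .of_nonneg_of_le (fun l => Finset.prod_nonneg fun _ _ => by positivity)
      (fun l => prod_pairsLt_inv_sq_le l.2.1) hmajorant

/-- For every `n ≥ 2`, the series
`V_n = Σ_{λ_1 > … > λ_{n-1} > λ_n = 0} ∏_{r<s} (λ_r − λ_s)^{-2}` converges. -/
theorem statement4 (n : ℕ) (hn : 2 ≤ n) :
    Summable (fun l : DecSet n =>
      ∏ p ∈ pairsLt n, ((((l.1 p.1 - l.1 p.2 : ℤ) : ℝ)) ^ 2)⁻¹) :=
  statement4_general n
end
end

section
/- (Orbit structure for large N.) Let n ≥ 2 and let I ∈ ℤ^n with I_1 > I_2 > … > I_{n−1} > I_n = 0. Then for every integer N > 2·I_1, one has I ∈ J_{n,N}, the orbit Ω(I, N) of I under the translation action Φ_N has exactly N elements, and I is the lexicographically smallest element of Ω(I, N). -/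
open scoped BigOperators

noncomputable section

/-- `J_{n,N}`: strictly decreasing integer tuples with entries in `{0, …, N−1}`. -/
def JFinset (n N : ℕ) : Finset (Fin n → ℤ) :=
  (Fintype.piFinset fun _ : Fin n => Finset.Icc (0 : ℤ) ((N : ℤ) - 1)).filter
    (fun I => ∀ r s : Fin n, r < s → I s < I r)

/-- `J` is in the orbit of `I` under the translation action `Φ_N`:
`J ∈ J_{n,N}` and the multiset of entries of `J` is the multiset of residues mod `N`
of `I + (l, …, l)` for some `l ∈ ℤ`. -/
def inOrbit (n N : ℕ) (I J : Fin n → ℤ) : Prop :=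
  J ∈ JFinset n N ∧
    ∃ l : ℤ, Multiset.map J Finset.univ.val
      = Multiset.map (fun r : Fin n => (I r + l) % (N : ℤ)) Finset.univ.val

/-- Strict lexicographic order on tuples. -/
def LexLt {n : ℕ} (I J : Fin n → ℤ) : Prop :=
  ∃ r : Fin n, (∀ q : Fin n, q < r → I q = J q) ∧ I r < J r

/-- `I` is the lexicographically smallest element of its orbit. -/
def IsOrbitMin (n N : ℕ) (I : Fin n → ℤ) : Prop :=
  ∀ J : Fin n → ℤ, inOrbit n N I J → J = I ∨ LexLt I J

/-! All entries of `I` lie in `[0, I₁]` with `2 I₁ < N`. A shift by `d ≢ 0 (mod N)` always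
produces a residue above `I₁`: the top entry `I₁ + d` if it does not wrap around, and otherwise
the residue `d ≥ N - I₁ > I₁` of the entry `0`. Hence every other element of the orbit has a first
entry larger than `I₁`, and the shifts `d = 0, …, N - 1` give pairwise distinct orbit elements. -/

open Finset Function

theorem StrictAnti.eq_of_map_univ_eq {α : Type*} [LinearOrder α] {n : ℕ} {J K : Fin n → α}
    (hJ : StrictAnti J) (hK : StrictAnti K)
    (h : Multiset.map J univ.val = Multiset.map K univ.val) : J = K := by
  rw [Fin.univ_val_map, Fin.univ_val_map, Multiset.coe_eq_coe] at h
  exact List.ofFn_injective <| h.eq_of_pairwise' (r := (· > ·))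
    (List.pairwise_ofFn.2 fun _ _ hij => hJ hij) (List.pairwise_ofFn.2 fun _ _ hij => hK hij)

theorem exists_strictAnti_map_univ_eq {α : Type*} [LinearOrder α] {n : ℕ} (v : Fin n → α)
    (hv : Injective v) :
    ∃ J : Fin n → α, StrictAnti J ∧ Multiset.map J univ.val = Multiset.map v univ.val := by
  have hcard : (univ.image v).card = n := by rw [card_image_of_injective _ hv, card_fin]
  set e := (univ.image v).orderEmbOfFin hcard
  refine ⟨e ∘ Fin.rev, e.strictMono.comp_strictAnti Fin.rev_strictAnti, ?_⟩
  rw [← Multiset.map_map, (Multiset.bijective_iff_map_univ_eq_univ _).1 Fin.rev_bijective,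
    ← image_val_of_injOn hv.injOn, ← image_orderEmbOfFin_univ (univ.image v) hcard,
    image_val_of_injOn e.injective.injOn]

/-- The residues in `{0, …, N - 1}` of `v + (l, …, l)`; `Φ_N(l, v)` is their decreasing
rearrangement. -/
def shiftMod {n : ℕ} (N : ℕ) (l : ℤ) (v : Fin n → ℤ) : Fin n → ℤ :=
  fun r => (v r + l) % (N : ℤ)

section shiftMod

variable {n N : ℕ}

theorem shiftMod_shiftMod (k l : ℤ) (v : Fin n → ℤ) :
    shiftMod N k (shiftMod N l v) = shiftMod N (l + k) v := by
  ext r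
  simp only [shiftMod, Int.emod_add_emod, add_assoc]

theorem shiftMod_emod (l : ℤ) (v : Fin n → ℤ) : shiftMod N (l % N) v = shiftMod N l v := by
  ext r
  simp only [shiftMod, Int.add_emod_emod]

theorem shiftMod_zero {v : Fin n → ℤ} (hv : ∀ r, 0 ≤ v r ∧ v r < N) : shiftMod N 0 v = v := by
  ext r
  simpa [shiftMod] using Int.emod_eq_of_lt (hv r).1 (hv r).2

theorem shiftMod_mem_Ico (hN : 0 < N) (l : ℤ) (v : Fin n → ℤ) (r : Fin n) :
    0 ≤ shiftMod N l v r ∧ shiftMod N l v r < N :=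
  ⟨Int.emod_nonneg _ (by omega), Int.emod_lt_of_pos _ (by omega)⟩

theorem shiftMod_injective {v : Fin n → ℤ} (hv : Injective v) (hvN : ∀ r, 0 ≤ v r ∧ v r < N)
    (l : ℤ) : Injective (shiftMod N l v) := by
  intro r s h
  have hrs : v r % N = v s % N := Int.ModEq.add_right_cancel' l h
  rw [Int.emod_eq_of_lt (hvN r).1 (hvN r).2, Int.emod_eq_of_lt (hvN s).1 (hvN s).2] at hrs
  exact hv hrs

theorem map_shiftMod_map (k l : ℤ) (v : Fin n → ℤ) :
    Multiset.map (fun x => (x + k) % (N : ℤ)) (Multiset.map (shiftMod N l v) univ.val)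
      = Multiset.map (shiftMod N (l + k) v) univ.val := by
  rw [Multiset.map_map, ← shiftMod_shiftMod]
  rfl

theorem mem_JFinset_iff {J : Fin n → ℤ} :
    J ∈ JFinset n N ↔ StrictAnti J ∧ ∀ r, 0 ≤ J r ∧ J r < N := by
  simp only [JFinset, mem_filter, Fintype.mem_piFinset, mem_Icc, Int.le_sub_one_iff]
  exact ⟨fun ⟨hb, ha⟩ => ⟨fun _ _ h => ha _ _ h, hb⟩, fun ⟨ha, hb⟩ => ⟨hb, fun _ _ h => ha h⟩⟩

theorem setOf_inOrbit_eq_image (hN : 0 < N) {I : Fin n → ℤ} {f : ℤ → Fin n → ℤ}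
    (hf : ∀ l, StrictAnti (f l) ∧
      Multiset.map (f l) univ.val = Multiset.map (shiftMod N l I) univ.val) :
    {J | inOrbit n N I J} = f '' Set.Ico 0 N := by
  ext J
  constructor
  · rintro ⟨hJ, l, hl⟩
    refine ⟨l % N, ⟨Int.emod_nonneg _ (by omega), Int.emod_lt_of_pos _ (by omega)⟩, ?_⟩
    refine (hf _).1.eq_of_map_univ_eq (mem_JFinset_iff.1 hJ).1 ?_
    rw [(hf _).2, shiftMod_emod]
    exact hl.symm
  · rintro ⟨l, -, rfl⟩
    refine ⟨mem_JFinset_iff.2 ⟨(hf l).1, fun r => ?_⟩, l, (hf l).2⟩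
    have hr : f l r ∈ Multiset.map (shiftMod N l I) univ.val :=
      (hf l).2 ▸ Multiset.mem_map_of_mem _ (mem_univ_val r)
    obtain ⟨s, -, hs⟩ := Multiset.mem_map.1 hr
    exact hs ▸ shiftMod_mem_Ico hN l I s

end shiftMod

section strictAnti

variable {m N : ℕ} {I : Fin (m + 1) → ℤ}

theorem forall_mem_Ico_of_strictAnti (hI : StrictAnti I) (hlast : I (Fin.last m) = 0)
    (hN : 2 * I 0 < N) (r : Fin (m + 1)) : 0 ≤ I r ∧ I r < N := by
  have h0 : 0 ≤ I r := hlast ▸ hI.antitone (Fin.le_last r)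
  have h1 : I r ≤ I 0 := hI.antitone (Fin.zero_le r)
  omega

theorem exists_lt_shiftMod_of_strictAnti (hI : StrictAnti I) (hlast : I (Fin.last m) = 0)
    (hN : 2 * I 0 < N) {d : ℤ} (hd : d % N ≠ 0) : ∃ r, I 0 < shiftMod N d I r := by
  have h0 := (forall_mem_Ico_of_strictAnti hI hlast hN 0).1
  have hd0 : 0 ≤ d % N := Int.emod_nonneg _ (by omega)
  have hdN : d % N < N := Int.emod_lt_of_pos _ (by omega)
  rw [← shiftMod_emod]
  by_cases hwrap : I 0 + d % N < N
  · refine ⟨0, ?_⟩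
    rw [shiftMod, Int.emod_eq_of_lt (by omega) hwrap]
    omega
  · refine ⟨Fin.last m, ?_⟩
    rw [shiftMod, hlast, zero_add, Int.emod_emod_of_dvd _ dvd_rfl]
    omega

theorem isOrbitMin_of_strictAnti (hI : StrictAnti I) (hlast : I (Fin.last m) = 0)
    (hN : 2 * I 0 < N) : IsOrbitMin (m + 1) N I := by
  rintro J ⟨hJ, l, hl⟩
  have hJanti := (mem_JFinset_iff.1 hJ).1
  by_cases hl0 : l % N = 0
  · left
    have hshift : shiftMod N l I = I := by
      rw [← shiftMod_emod, hl0, shiftMod_zero (forall_mem_Ico_of_strictAnti hI hlast hN)]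
    exact hJanti.eq_of_map_univ_eq hI (hl.trans (congrArg (Multiset.map · univ.val) hshift))
  · right
    obtain ⟨r, hr⟩ := exists_lt_shiftMod_of_strictAnti hI hlast hN hl0
    have hrJ : shiftMod N l I r ∈ Multiset.map J univ.val :=
      hl ▸ Multiset.mem_map_of_mem _ (mem_univ_val r)
    obtain ⟨s, -, hs⟩ := Multiset.mem_map.1 hrJ
    exact ⟨0, fun q hq => absurd hq (Fin.not_lt_zero q),
      hr.trans_le (hs ▸ hJanti.antitone (Fin.zero_le s))⟩

theorem injOn_map_shiftMod_of_strictAnti (hI : StrictAnti I) (hlast : I (Fin.last m) = 0)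
    (hN : 2 * I 0 < N) :
    Set.InjOn (fun l => Multiset.map (shiftMod N l I) univ.val) (Set.Ico 0 N) := by
  intro l hl l' hl' h
  by_contra hne
  wlog hlt : l < l' generalizing l l'
  · exact this hl' hl h.symm (Ne.symm hne) (by omega)
  have hinv : Multiset.map I univ.val = Multiset.map (shiftMod N (l' - l) I) univ.val := by
    have := congrArg (Multiset.map fun x => (x + -l) % (N : ℤ)) h
    rwa [map_shiftMod_map, map_shiftMod_map, add_neg_cancel,
      shiftMod_zero (forall_mem_Ico_of_strictAnti hI hlast hN), ← sub_eq_add_neg] at this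
  have hd : (l' - l) % N ≠ 0 := by
    rw [Int.emod_eq_of_lt (by omega) (by simp only [Set.mem_Ico] at hl hl'; omega)]
    omega
  obtain ⟨r, hr⟩ := exists_lt_shiftMod_of_strictAnti hI hlast hN hd
  have hrI : shiftMod N (l' - l) I r ∈ Multiset.map I univ.val :=
    hinv ▸ Multiset.mem_map_of_mem _ (mem_univ_val r)
  obtain ⟨s, -, hs⟩ := Multiset.mem_map.1 hrI
  exact (hs ▸ hI.antitone (Fin.zero_le s)).not_gt hr

theorem ncard_setOf_inOrbit_of_strictAnti (hI : StrictAnti I) (hlast : I (Fin.last m) = 0)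
    (hN : 2 * I 0 < N) : {J | inOrbit (m + 1) N I J}.ncard = N := by
  have hbd := forall_mem_Ico_of_strictAnti hI hlast hN
  have hN0 : 0 < N := by have := hbd 0; omega
  choose f hf using fun l =>
    exists_strictAnti_map_univ_eq _ (shiftMod_injective hI.injective hbd l)
  have hinj : Set.InjOn f (Set.Ico 0 N) := fun l hl l' hl' h =>
    injOn_map_shiftMod_of_strictAnti hI hlast hN hl hl' <| by
      simp only [← (hf l).2, ← (hf l').2, h]
  rw [setOf_inOrbit_eq_image hN0 hf, hinj.ncard_image, ← coe_Ico,
    Set.ncard_coe_finset, Int.card_Ico]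
  omega

end strictAnti

/-- **Orbit structure for large `N`.** -/
theorem statement6 (n : ℕ) (hn : 2 ≤ n) (I : Fin n → ℤ)
    (hdec : ∀ r s : Fin n, r < s → I s < I r)
    (hlast : ∀ r : Fin n, (r : ℕ) = n - 1 → I r = 0)
    (N : ℕ) (hN : 2 * I ⟨0, by omega⟩ < (N : ℤ)) :
    I ∈ JFinset n N ∧
    Set.ncard {J : Fin n → ℤ | inOrbit n N I J} = N ∧
    IsOrbitMin n N I := by
  obtain ⟨m, rfl⟩ : ∃ m, n = m + 1 := ⟨n - 1, by omega⟩
  have hI : StrictAnti I := fun r s h => hdec r s h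
  have hlast : I (Fin.last m) = 0 := hlast _ (by simp)
  have hN : 2 * I 0 < N := hN
  exact ⟨mem_JFinset_iff.2 ⟨hI, forall_mem_Ico_of_strictAnti hI hlast hN⟩,
    ncard_setOf_inOrbit_of_strictAnti hI hlast hN, isOrbitMin_of_strictAnti hI hlast hN⟩
end
end

section
/- (Uniform spacing of the largest entry of orbit minima.) Let n ≥ 1 and N ≥ n, and let I ∈ J_{n,N} be the lexicographically smallest element of its orbit Ω(I, N) under the translation action Φ_N. Then I_1/N ≤ 1 − 1/n, i.e. n·I_1 ≤ (n−1)·N. -/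
/-!
Translating `I` by `-I s` moves `I s` to `0`, and every entry of the translate is at most
`N + I (s + 1) - I s` when `s` is not last, and at most `I 0 - I last` when it is. The sorted
translate lies in the orbit and starts with one of these entries, so lexicographic minimality bounds
`I 0` by each of them. For `s` last this forces `I last = 0`; summing the other `n - 1` bounds then
telescopes to `(n - 1) I 0 ≤ (n - 1) N - I 0`.
-/

open scoped BigOperators

noncomputable section

open Finset Function

theorem mem_JFinset {n N : ℕ} {I : Fin n → ℤ} :
    I ∈ JFinset n N ↔ (∀ r, I r ∈ Icc 0 ((N : ℤ) - 1)) ∧ StrictAnti I :=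
  mem_filter.trans (and_congr Fintype.mem_piFinset Iff.rfl)

theorem exists_mem_JFinset_map_eq {n N : ℕ} (f : Fin n → ℤ) (hf : Injective f)
    (hrange : ∀ r, f r ∈ Icc 0 ((N : ℤ) - 1)) :
    ∃ J ∈ JFinset n N, univ.val.map J = univ.val.map f := by
  set S := univ.image f
  have hS : #S = n := by simp [S, card_image_of_injective _ hf]
  set e := S.orderEmbOfFin hS
  refine ⟨fun k => e k.rev, mem_JFinset.2 ⟨fun k => ?_, fun a b hab => ?_⟩, ?_⟩
  · obtain ⟨r, -, hr⟩ := mem_image.1 (S.orderEmbOfFin_mem hS k.rev)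
    exact hr ▸ hrange r
  · exact e.strictMono (Fin.rev_lt_rev.2 hab)
  · have hJ : Injective fun k : Fin n => e k.rev := e.injective.comp Fin.rev_injective
    rw [← image_val_of_injOn hJ.injOn, ← image_val_of_injOn hf.injOn]
    change (image (e ∘ Fin.revPerm) univ).val = S.val
    rw [← image_image, image_univ_equiv, S.image_orderEmbOfFin_univ hS]

theorem LexLt.apply_zero_le {m : ℕ} {I J : Fin (m + 1) → ℤ} (h : LexLt I J) : I 0 ≤ J 0 := by
  obtain ⟨r, hbefore, hr⟩ := h
  rcases (Fin.zero_le r).eq_or_lt with rfl | hpos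
  · exact hr.le
  · exact (hbefore 0 hpos).le

theorem injective_add_emod {n : ℕ} {N : ℤ} {I : Fin n → ℤ} (hI : Injective I)
    (hrange : ∀ r, I r ∈ Icc 0 (N - 1)) (l : ℤ) :
    Injective fun r => (I r + l) % N := by
  intro r s hrs
  have hmod : I r ≡ I s [ZMOD N] := Int.ModEq.add_right_cancel' l hrs
  have hr := mem_Icc.1 (hrange r)
  have hs := mem_Icc.1 (hrange s)
  exact hI (by rwa [Int.ModEq, Int.emod_eq_of_lt hr.1 (by omega),
    Int.emod_eq_of_lt hs.1 (by omega)] at hmod)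

theorem IsOrbitMin.apply_zero_le {m N : ℕ} {I : Fin (m + 1) → ℤ} (hI : I ∈ JFinset (m + 1) N)
    (hmin : IsOrbitMin (m + 1) N I) (l B : ℤ) (hB : ∀ r, (I r + l) % N ≤ B) : I 0 ≤ B := by
  obtain ⟨hrange, hanti⟩ := mem_JFinset.1 hI
  have hN : (0 : ℤ) < N := by have := mem_Icc.1 (hrange 0); omega
  set f := fun r => (I r + l) % N
  have hf : ∀ r, f r ∈ Icc 0 ((N : ℤ) - 1) := fun r =>
    mem_Icc.2 ⟨Int.emod_nonneg _ hN.ne', Int.le_sub_one_of_lt (Int.emod_lt_of_pos _ hN)⟩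
  obtain ⟨J, hJ, hmap⟩ :=
    exists_mem_JFinset_map_eq f (injective_add_emod hanti.injective hrange l) hf
  have hIJ : I 0 ≤ J 0 := by
    rcases hmin J ⟨hJ, l, hmap⟩ with rfl | hlt
    · exact le_rfl
    · exact hlt.apply_zero_le
  obtain ⟨r, -, hr⟩ := Multiset.mem_map.1 (hmap ▸ Multiset.mem_map_of_mem J (mem_univ 0))
  exact hIJ.trans (hr ▸ hB r)

section Decreasing

variable {m N : ℕ} {I : Fin (m + 1) → ℤ}

theorem emod_sub_castSucc_le (hI : I ∈ JFinset (m + 1) N) (s : Fin m) (r : Fin (m + 1)) :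
    (I r + -I s.castSucc) % N ≤ N + I s.succ - I s.castSucc := by
  obtain ⟨hrange, hanti⟩ := mem_JFinset.1 hI
  have hr := mem_Icc.1 (hrange r)
  have hs := mem_Icc.1 (hrange s.castSucc)
  have hs' := mem_Icc.1 (hrange s.succ)
  rcases le_or_gt r s.castSucc with hle | hlt
  · have := hanti.antitone hle
    rw [Int.emod_eq_of_lt (by omega) (by omega)]
    omega
  · have hsucc := hanti.antitone (Fin.castSucc_lt_iff_succ_le.1 hlt)
    have := hanti hlt
    rw [Int.emod_eq_add_self_emod, Int.emod_eq_of_lt (by omega) (by omega)]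
    omega

theorem emod_sub_last_le (hI : I ∈ JFinset (m + 1) N) (r : Fin (m + 1)) :
    (I r + -I (Fin.last m)) % N ≤ I 0 - I (Fin.last m) := by
  obtain ⟨hrange, hanti⟩ := mem_JFinset.1 hI
  have hr := mem_Icc.1 (hrange r)
  have hl := mem_Icc.1 (hrange (Fin.last m))
  have := hanti.antitone (Fin.le_last r)
  have := hanti.antitone (Fin.zero_le r)
  rw [Int.emod_eq_of_lt (by omega) (by omega)]
  omega

end Decreasing

/-- **Uniform spacing of the largest entry of orbit minima.** -/
theorem statement8 (n N : ℕ) (hn : 1 ≤ n)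
    (I : Fin n → ℤ) (hI : I ∈ JFinset n N) (hmin : IsOrbitMin n N I) :
    (n : ℤ) * I ⟨0, by omega⟩ ≤ ((n : ℤ) - 1) * N := by
  obtain ⟨m, rfl⟩ : ∃ m, n = m + 1 := ⟨n - 1, by omega⟩
  have hlast : I (Fin.last m) ≤ 0 := by
    have := hmin.apply_zero_le hI _ _ (emod_sub_last_le hI)
    omega
  have hgap : ∀ s : Fin m, I 0 ≤ N + (I s.succ - I s.castSucc) := fun s => by
    have := hmin.apply_zero_le hI _ _ (emod_sub_castSucc_le hI s)
    omega
  have htel : ∑ s : Fin m, (I s.succ - I s.castSucc) = I (Fin.last m) - I 0 := by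
    rw [sum_sub_distrib]
    linarith [Fin.sum_univ_succ I, Fin.sum_univ_castSucc I]
  have hsum := sum_le_sum fun s (_ : s ∈ univ) => hgap s
  rw [sum_add_distrib, htel] at hsum
  simp only [sum_const, card_univ, Fintype.card_fin, nsmul_eq_mul] at hsum
  change ((m + 1 : ℕ) : ℤ) * I 0 ≤ _
  push_cast
  linarith
end
end

section
/- For every n ≥ 3, the series Σ_{I ∈ ℤ^n, I_1 > I_2 > … > I_{n−1} > I_n = 0} ∏_{1≤r<s≤n} (I_r − I_s)^{−1} converges (has finite sum). -/
/-!
Write `d_j = I_j - I_{j+1} ≥ 1` for the gaps of the tuple. Every factor `(I_r - I_s)⁻¹` is at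
most `1`, so the product is at most the product over the pairs at distance one and two,
whose factors are `d_j⁻¹` and `(d_j + d_{j+1})⁻¹ ≤ (d_j d_{j+1})^{-1/2}`. As `n ≥ 3`, every gap
lies in some pair at distance two, so the summand is at most `∏_j d_j^{-3/2}`. A tuple ending in `0` is
determined by its gaps, and `∑_{d ∈ ℕ^{n-1}} ∏_j d_j^{-3/2} = ζ(3/2)^{n-1} < ∞`.
-/

open scoped BigOperators

noncomputable section

open Finset Function

lemma summable_prod_fin_pi {g : ℕ → ℝ} (hg : Summable g) (hg0 : 0 ≤ g) :
    ∀ k : ℕ, Summable (fun x : Fin k → ℕ => ∏ j, g (x j))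
  | 0 => by simpa using (Summable.of_finite : Summable fun _ : Fin 0 → ℕ => (1 : ℝ))
  | k + 1 => by
    have := (hg.mul_of_nonneg (summable_prod_fin_pi hg hg0 k) hg0
      fun x => prod_nonneg fun j _ => hg0 _).comp_injective
        (Fin.consEquiv fun _ => ℕ).symm.injective
    simpa [Fin.prod_univ_succ, comp_def, Fin.tail] using this

lemma prod_castSucc_mul_succ_le_prod {m : ℕ} {h : Fin (m + 2) → ℝ} (h0 : 0 ≤ h)
    (h1 : h ≤ 1) :
    ∏ j : Fin (m + 1), (h j.castSucc * h j.succ) ≤ ∏ j, h j := by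
  rw [prod_mul_distrib, Fin.prod_univ_castSucc h]
  gcongr
  · exact prod_nonneg fun j _ => h0 _
  · rw [Fin.prod_univ_castSucc, Fin.succ_last]
    exact mul_le_of_le_one_left (h0 _) (prod_le_one (fun j _ => h0 _) fun j _ => h1 _)

lemma inv_add_le_inv_sqrt_mul_inv_sqrt {a b : ℝ} (ha : 0 < a) (hb : 0 < b) :
    (a + b)⁻¹ ≤ (√a)⁻¹ * (√b)⁻¹ := by
  rw [← mul_inv, ← Real.sqrt_mul ha.le]
  exact inv_anti₀ (by positivity) (Real.sqrt_le_iff.2 ⟨by positivity, by nlinarith⟩)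

lemma prod_le_prod_comp_of_injective {ι α : Type*} [Fintype ι] {t : Finset α} {f : α → ℝ}
    {e : ι → α} (he : Injective e) (het : ∀ i, e i ∈ t) (hf0 : ∀ a ∈ t, 0 ≤ f a)
    (hf1 : ∀ a ∈ t, f a ≤ 1) : ∏ a ∈ t, f a ≤ ∏ i, f (e i) := by
  calc ∏ a ∈ t, f a
      ≤ ∏ a ∈ univ.map ⟨e, he⟩, f a := prod_le_prod_of_subset_of_le_one
        (by simpa [subset_iff] using het) hf0 fun a ha _ => hf1 a ha
    _ = ∏ i, f (e i) := prod_map univ ⟨e, he⟩ f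

def invPow3Half (x : ℝ) : ℝ := (x * √x)⁻¹

lemma summable_invPow3Half : Summable fun k : ℕ => invPow3Half k := by
  refine (Real.summable_nat_rpow_inv.2 (by norm_num : (1 : ℝ) < 3 / 2)).congr fun k => ?_
  rw [invPow3Half, show (3 / 2 : ℝ) = 1 + 1 / 2 by norm_num,
    Real.rpow_add' k.cast_nonneg (by norm_num), Real.rpow_one, Real.sqrt_eq_rpow]

def gap {m : ℕ} (I : Fin (m + 1) → ℤ) (j : Fin m) : ℤ := I j.castSucc - I j.succ

lemma gap_pos {m : ℕ} {I : Fin (m + 1) → ℤ} (hI : StrictAnti I) (j : Fin m) : 0 < gap I j :=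
  sub_pos.2 (hI Fin.castSucc_lt_succ)

lemma eq_of_gap_eq {m : ℕ} {I J : Fin (m + 1) → ℤ} (hlast : I (Fin.last m) = J (Fin.last m))
    (hgap : ∀ j, gap I j = gap J j) : I = J := by
  funext r
  induction r using Fin.reverseInduction with
  | last => exact hlast
  | cast j ih => have := hgap j; unfold gap at this; omega

def shortPair (m : ℕ) : Fin (m + 1) ⊕ Fin m → Fin (m + 2) × Fin (m + 2) :=
  Sum.elim (fun j => (j.castSucc, j.succ)) (fun j => (j.castSucc.castSucc, j.succ.succ))

lemma shortPair_injective (m : ℕ) : Injective (shortPair m) := by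
  rintro (i | i) (j | j) h <;>
    simp only [shortPair, Sum.elim_inl, Sum.elim_inr, Prod.ext_iff, Fin.ext_iff, Fin.val_castSucc,
      Fin.val_succ, Sum.inl.injEq, Sum.inr.injEq, reduceCtorEq] at h ⊢ <;>
    omega

lemma shortPair_mem_pairsLt {m : ℕ} (i : Fin (m + 1) ⊕ Fin m) :
    shortPair m i ∈ pairsLt (m + 2) := by
  rcases i with i | i <;>
    simp only [shortPair, pairsLt, mem_filter, mem_univ, true_and, Sum.elim_inl, Sum.elim_inr,
      Fin.lt_def, Fin.val_castSucc, Fin.val_succ] <;>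
    omega

lemma gap_castSucc_add_gap_succ {m : ℕ} (I : Fin (m + 2) → ℤ) (j : Fin m) :
    gap I j.castSucc + gap I j.succ = I j.castSucc.castSucc - I j.succ.succ := by
  simp only [gap, Fin.succ_castSucc]
  ring

theorem prod_pairsLt_inv_sub_le_prod_invPow3Half_gap {m : ℕ} {I : Fin (m + 3) → ℤ}
    (hI : StrictAnti I) :
    ∏ p ∈ pairsLt (m + 3), (((I p.1 - I p.2 : ℤ) : ℝ))⁻¹ ≤
      ∏ j, invPow3Half (gap I j) := by
  have hgap : ∀ j, (1 : ℝ) ≤ gap I j := fun j => by exact_mod_cast gap_pos hI j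
  have hgap0 : ∀ j, (0 : ℝ) < gap I j := fun j => by linarith [hgap j]
  have hdiff : ∀ p ∈ pairsLt (m + 3), (1 : ℝ) ≤ ((I p.1 - I p.2 : ℤ) : ℝ) := by
    intro p hp
    have := hI (mem_filter.1 hp).2
    exact_mod_cast (by omega : (1 : ℤ) ≤ I p.1 - I p.2)
  have hadjacent : 0 ≤ ∏ j, ((gap I j : ℝ))⁻¹ :=
    prod_nonneg fun j _ => (inv_pos.2 (hgap0 j)).le
  calc ∏ p ∈ pairsLt (m + 3), (((I p.1 - I p.2 : ℤ) : ℝ))⁻¹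
      ≤ ∏ i, (((I (shortPair _ i).1 - I (shortPair _ i).2 : ℤ) : ℝ))⁻¹ :=
        prod_le_prod_comp_of_injective (shortPair_injective _) shortPair_mem_pairsLt
          (fun p hp => inv_nonneg.2 (zero_le_one.trans (hdiff p hp)))
          fun p hp => inv_le_one_of_one_le₀ (hdiff p hp)
    _ = (∏ j, ((gap I j : ℝ))⁻¹) *
          ∏ j : Fin (m + 1), ((gap I j.castSucc : ℝ) + gap I j.succ)⁻¹ := by
        simp only [Fintype.prod_sum_type, shortPair, Sum.elim_inl, Sum.elim_inr,
          ← gap_castSucc_add_gap_succ, Int.cast_add]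
        rfl
    _ ≤ (∏ j, ((gap I j : ℝ))⁻¹) *
          ∏ j : Fin (m + 1), ((√(gap I j.castSucc))⁻¹ * (√(gap I j.succ))⁻¹) :=
        mul_le_mul_of_nonneg_left
          (prod_le_prod (fun j _ => (inv_pos.2 (add_pos (hgap0 _) (hgap0 _))).le)
            fun j _ => inv_add_le_inv_sqrt_mul_inv_sqrt (hgap0 _) (hgap0 _)) hadjacent
    _ ≤ (∏ j, ((gap I j : ℝ))⁻¹) * ∏ j, (√(gap I j))⁻¹ :=
        mul_le_mul_of_nonneg_left (prod_castSucc_mul_succ_le_prod (fun j => by positivity)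
          fun j => inv_le_one_of_one_le₀ (Real.one_le_sqrt.2 (hgap j))) hadjacent
    _ = ∏ j, invPow3Half (gap I j) := by
        simp only [← prod_mul_distrib, invPow3Half, mul_inv]

lemma strictAnti_of_mem_decSet {n : ℕ} {I : Fin n → ℤ} (hI : I ∈ DecSet n) : StrictAnti I :=
  fun r s h => hI.1 r s h

/-- For every `n ≥ 3`, the series
`Σ_{I_1 > … > I_{n-1} > I_n = 0} ∏_{r<s} (I_r − I_s)^{-1}` converges. -/
theorem statement10 (n : ℕ) (hn : 3 ≤ n) :
    Summable (fun l : DecSet n =>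
      ∏ p ∈ pairsLt n, (((l.1 p.1 - l.1 p.2 : ℤ) : ℝ))⁻¹) := by
  obtain ⟨m, rfl⟩ : ∃ m, n = m + 3 := ⟨n - 3, by omega⟩
  have hanti (l : DecSet (m + 3)) : StrictAnti l.1 := strictAnti_of_mem_decSet l.2
  let gaps : DecSet (m + 3) → Fin (m + 2) → ℕ := fun l j => (gap l.1 j).toNat
  have cast_gaps (l : DecSet (m + 3)) (j : Fin (m + 2)) : (gaps l j : ℝ) = gap l.1 j := by
    rw [← Int.cast_natCast, Int.toNat_of_nonneg (gap_pos (hanti l) j).le]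
  have gaps_injective : Injective gaps := fun l l' h => Subtype.ext <|
    eq_of_gap_eq (by rw [l.2.2 _ (by simp), l'.2.2 _ (by simp)]) fun j => by
      have : (gap l.1 j).toNat = (gap l'.1 j).toNat := congrFun h j
      have := gap_pos (hanti l) j
      have := gap_pos (hanti l') j
      omega
  have hdom := (summable_prod_fin_pi summable_invPow3Half
    (fun k => by unfold invPow3Half; positivity) _).comp_injective gaps_injective
  refine hdom.of_nonneg_of_le (fun l => prod_nonneg fun p hp => ?_) fun l => ?_
  · exact inv_nonneg.2 (by exact_mod_cast (sub_pos.2 (hanti l (mem_filter.1 hp).2)).le)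
  · simpa only [comp_apply, cast_gaps] using
      prod_pairsLt_inv_sub_le_prod_invPow3Half_gap (hanti l)
end
end
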